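/- arXiv:2503.02719 — 8 statements merged into one kernel-verified Lean document; each statement's English description precedes it below -/
import Mathlib

section
/- Let σ : ℝ → ℝ be monotone (nondecreasing), let t_k ≤ t_{k+1} be real times, let ε > 0, and let c, s_k, s_{k+1} ∈ ℝ. If |σ(t_k) − s_k| < ε, |σ(t_{k+1}) − s_{k+1}| < ε, s_k − c ≥ ε, and s_{k+1} − c ≥ ε, then σ(t) − c ≥ 0 for every t ∈ [t_k, t_{k+1}]. -/
theorem predicate_encoding_sound_general (σ : ℝ → ℝ) (hσ : Monotone σ)
    (tk tk1 : ℝ) (ε : ℝ) (c sk : ℝ)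
    (h1 : |σ tk - sk| < ε)
    (h3 : sk - c ≥ ε) :
    ∀ t ∈ Set.Icc tk tk1, σ t - c ≥ 0 := by
  rintro t ⟨htk, -⟩
  have hσtk : sk - ε < σ tk := by linarith [(abs_lt.mp h1).1]
  linarith [hσ htk]

theorem predicate_encoding_sound (σ : ℝ → ℝ) (hσ : Monotone σ)
    (tk tk1 : ℝ) (ht : tk ≤ tk1) (ε : ℝ) (hε : 0 < ε) (c sk sk1 : ℝ)
    (h1 : |σ tk - sk| < ε) (h2 : |σ tk1 - sk1| < ε)
    (h3 : sk - c ≥ ε) (h4 : sk1 - c ≥ ε) :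
    ∀ t ∈ Set.Icc tk tk1, σ t - c ≥ 0 :=
  predicate_encoding_sound_general σ hσ tk tk1 ε c sk h1 h3
end

section
/- Let σ : ℝ → ℝ be monotone (nondecreasing), let t_k ≤ t_{k+1} be real times, let ε > 0, and let c, s_k, s_{k+1} ∈ ℝ. If |σ(t_k) − s_k| < ε, |σ(t_{k+1}) − s_{k+1}| < ε, s_k − c ≤ −ε, and s_{k+1} − c ≤ −ε, then σ(t) − c < 0 for every t ∈ [t_k, t_{k+1}]. -/
/-! A monotone profile is bounded on the segment by its value at the right stamp, and that value
lies within `ε` of a stamped value that is at least `ε` below the threshold. -/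

theorem lt_of_abs_sub_lt_of_sub_le_neg {x s c ε : ℝ} (hx : |x - s| < ε) (hs : s - c ≤ -ε) :
    x < c := by
  linarith [(abs_lt.mp hx).2]

theorem negated_predicate_encoding_sound_general (σ : ℝ → ℝ) (hσ : Monotone σ)
    (tk tk1 : ℝ) (ε : ℝ) (c sk1 : ℝ)
    (h2 : |σ tk1 - sk1| < ε)
    (h4 : sk1 - c ≤ -ε) :
    ∀ t ∈ Set.Icc tk tk1, σ t - c < 0 := by
  intro t ht
  have hend : σ tk1 < c := lt_of_abs_sub_lt_of_sub_le_neg h2 h4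
  linarith [hσ ht.2]

theorem negated_predicate_encoding_sound (σ : ℝ → ℝ) (hσ : Monotone σ)
    (tk tk1 : ℝ) (ht : tk ≤ tk1) (ε : ℝ) (hε : 0 < ε) (c sk sk1 : ℝ)
    (h1 : |σ tk - sk| < ε) (h2 : |σ tk1 - sk1| < ε)
    (h3 : sk - c ≤ -ε) (h4 : sk1 - c ≤ -ε) :
    ∀ t ∈ Set.Icc tk tk1, σ t - c < 0 :=
  negated_predicate_encoding_sound_general σ hσ tk tk1 ε c sk1 h2 h4
end

section
/- Let P : ℝ → Prop, let t_0 ≤ t_1 ≤ … ≤ t_K be real times (K ≥ 1), let k ∈ {0, …, K−1}, let a ≤ b be reals, and let ε_t > 0. Assume the coverage condition [t_k + a, t_{k+1} + b] ⊆ [t_0, t_K], and assume that for every l ∈ {0, …, K−1} such that [t_l, t_{l+1}] ∩ [t_k + a − ε_t, t_{k+1} + b] ≠ ∅ we have P s for all s ∈ [t_l, t_{l+1}]. Then for every t ∈ [t_k, t_{k+1}] and every s ∈ [t + a, t + b], P s holds. -/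
open Set

theorem exists_mem_Icc_succ_of_mem_Icc {α : Type*} [LinearOrder α] (t : ℕ → α) {K : ℕ}
    (hK : 1 ≤ K) {s : α} (hs : s ∈ Icc (t 0) (t K)) : ∃ l < K, s ∈ Icc (t l) (t (l + 1)) := by
  induction K, hK using Nat.le_induction generalizing s with
  | base => exact ⟨0, zero_lt_one, hs⟩
  | succ n _ ih =>
    rcases le_or_gt s (t n) with hsn | hsn
    · obtain ⟨l, hl, hsl⟩ := ih ⟨hs.1, hsn⟩
      exact ⟨l, hl.trans (Nat.lt_succ_self n), hsl⟩
    · exact ⟨n, Nat.lt_succ_self n, hsn.le, hs.2⟩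

theorem always_encoding_sound_general (P : ℝ → Prop) (K : ℕ) (hK : 1 ≤ K)
    (t : ℕ → ℝ)
    (k : ℕ) (a b : ℝ) (εt : ℝ) (hεt : 0 < εt)
    (hcov : Set.Icc (t k + a) (t (k + 1) + b) ⊆ Set.Icc (t 0) (t K))
    (hseg : ∀ l < K,
      (Set.Icc (t l) (t (l + 1)) ∩ Set.Icc (t k + a - εt) (t (k + 1) + b)).Nonempty →
      ∀ s ∈ Set.Icc (t l) (t (l + 1)), P s) :
    ∀ x ∈ Set.Icc (t k) (t (k + 1)), ∀ s ∈ Set.Icc (x + a) (x + b), P s := by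
  intro x hx s hs
  have hs_window : s ∈ Icc (t k + a) (t (k + 1) + b) :=
    ⟨by linarith [hx.1, hs.1], by linarith [hx.2, hs.2]⟩
  obtain ⟨l, hl, hsl⟩ := exists_mem_Icc_succ_of_mem_Icc t hK (hcov hs_window)
  have hs_margin : s ∈ Icc (t k + a - εt) (t (k + 1) + b) :=
    ⟨by linarith [hs_window.1], hs_window.2⟩
  exact hseg l hl ⟨s, hsl, hs_margin⟩ s hsl

theorem always_encoding_sound (P : ℝ → Prop) (K : ℕ) (hK : 1 ≤ K)
    (t : ℕ → ℝ) (ht : ∀ l < K, t l ≤ t (l + 1))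
    (k : ℕ) (hk : k < K) (a b : ℝ) (hab : a ≤ b) (εt : ℝ) (hεt : 0 < εt)
    (hcov : Set.Icc (t k + a) (t (k + 1) + b) ⊆ Set.Icc (t 0) (t K))
    (hseg : ∀ l < K,
      (Set.Icc (t l) (t (l + 1)) ∩ Set.Icc (t k + a - εt) (t (k + 1) + b)).Nonempty →
      ∀ s ∈ Set.Icc (t l) (t (l + 1)), P s) :
    ∀ x ∈ Set.Icc (t k) (t (k + 1)), ∀ s ∈ Set.Icc (x + a) (x + b), P s :=
  always_encoding_sound_general P K hK t k a b εt hεt hcov hseg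
end

section
/- Let P : ℝ → Prop, let t_0 ≤ t_1 ≤ … ≤ t_K be real times (K ≥ 1), let k ∈ {0, …, K−1}, let 0 ≤ a ≤ b be reals, and let ε_t > 0. Assume t_{k+1} − t_k ≤ b − a − ε_t, and assume there exists l ∈ {0, …, K−1} such that [t_l, t_{l+1}] ∩ [t_{k+1} + a, t_k + b − ε_t] ≠ ∅ and P s holds for all s ∈ [t_l, t_{l+1}]. Then for every t ∈ [t_k, t_{k+1}] there exists s ∈ [t + a, t + b] such that P s holds. -/
theorem Icc_add_subset_Icc_add_of_mem {α : Type*} [AddCommMonoid α] [PartialOrder α]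
    [IsOrderedAddMonoid α] {t₀ t₁ x : α} (hx : x ∈ Set.Icc t₀ t₁) (a b : α) :
    Set.Icc (t₁ + a) (t₀ + b) ⊆ Set.Icc (x + a) (x + b) :=
  Set.Icc_subset_Icc (by gcongr; exact hx.2) (by gcongr; exact hx.1)

theorem eventually_encoding_sound_general (P : ℝ → Prop) (K : ℕ)
    (t : ℕ → ℝ) (k : ℕ) (a b : ℝ) (εt : ℝ) (hεt : 0 < εt)
    (hex : ∃ l < K,
      (Set.Icc (t l) (t (l + 1)) ∩ Set.Icc (t (k + 1) + a) (t k + b - εt)).Nonempty ∧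
      ∀ s ∈ Set.Icc (t l) (t (l + 1)), P s) :
    ∀ x ∈ Set.Icc (t k) (t (k + 1)), ∃ s ∈ Set.Icc (x + a) (x + b), P s := by
  obtain ⟨l, -, ⟨y, hy_segment, hy_window⟩, hP⟩ := hex
  intro x hx
  have hy : y ∈ Set.Icc (t (k + 1) + a) (t k + b) :=
    Set.Icc_subset_Icc_right (sub_le_self _ hεt.le) hy_window
  exact ⟨y, Icc_add_subset_Icc_add_of_mem hx a b hy, hP y hy_segment⟩

theorem eventually_encoding_sound (P : ℝ → Prop) (K : ℕ) (hK : 1 ≤ K)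
    (t : ℕ → ℝ) (ht : ∀ l < K, t l ≤ t (l + 1))
    (k : ℕ) (hk : k < K) (a b : ℝ) (ha : 0 ≤ a) (hab : a ≤ b) (εt : ℝ) (hεt : 0 < εt)
    (hlen : t (k + 1) - t k ≤ b - a - εt)
    (hex : ∃ l < K,
      (Set.Icc (t l) (t (l + 1)) ∩ Set.Icc (t (k + 1) + a) (t k + b - εt)).Nonempty ∧
      ∀ s ∈ Set.Icc (t l) (t (l + 1)), P s) :
    ∀ x ∈ Set.Icc (t k) (t (k + 1)), ∃ s ∈ Set.Icc (x + a) (x + b), P s :=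
  eventually_encoding_sound_general P K t k a b εt hεt hex
end

section
/- Let P₁, P₂ : ℝ → Prop, let t_0 ≤ t_1 ≤ … ≤ t_K be real times (K ≥ 1), let k ∈ {0, …, K−1}, let 0 ≤ a ≤ b be reals, and let ε_t > 0. Assume there exists l ∈ {0, …, K−1} such that [t_l, t_{l+1}] ∩ [t_{k+1} + a, t_k + b − ε_t] ≠ ∅, P₂ s holds for all s ∈ [t_l, t_{l+1}], and P₁ s holds for all s ∈ [t_k, t_{l+1}]. Then for every t ∈ [t_k, t_{k+1}] there exists t' ∈ [t + a, t + b] such that P₂ t' holds and P₁ t'' holds for all t'' ∈ [t, t']. -/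
/-! The witness is any point `s` of `[t_l, t_{l+1}] ∩ [t_{k+1} + a, t_k + b - ε_t]`: shrinking the
window to `[t_{k+1} + a, t_k + b]` makes it lie in `[x + a, x + b]` for every `x` of the segment
`[t_k, t_{k+1}]` at once, and `[x, s] ⊆ [t_k, t_{l+1}]` is where `P₁` is assumed. -/

open Set

lemma mem_Icc_add_of_mem_Icc_of_mem_Icc {u v x a b ε s : ℝ} (hε : 0 ≤ ε) (hx : x ∈ Icc u v)
    (hs : s ∈ Icc (v + a) (u + b - ε)) : s ∈ Icc (x + a) (x + b) :=
  ⟨by linarith [hx.2, hs.1], by linarith [hx.1, hs.2]⟩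

theorem until_encoding_sound_general (P₁ P₂ : ℝ → Prop) (K : ℕ)
    (t : ℕ → ℝ)
    (k : ℕ) (a b : ℝ) (εt : ℝ) (hεt : 0 < εt)
    (hex : ∃ l < K,
      (Set.Icc (t l) (t (l + 1)) ∩ Set.Icc (t (k + 1) + a) (t k + b - εt)).Nonempty ∧
      (∀ s ∈ Set.Icc (t l) (t (l + 1)), P₂ s) ∧
      (∀ s ∈ Set.Icc (t k) (t (l + 1)), P₁ s)) :
    ∀ x ∈ Set.Icc (t k) (t (k + 1)),
      ∃ t' ∈ Set.Icc (x + a) (x + b), P₂ t' ∧ ∀ t'' ∈ Set.Icc x t', P₁ t'' := by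
  obtain ⟨l, -, ⟨s, hs_seg, hs_win⟩, hP₂, hP₁⟩ := hex
  intro x hx
  refine ⟨s, mem_Icc_add_of_mem_Icc_of_mem_Icc hεt.le hx hs_win, hP₂ s hs_seg, ?_⟩
  exact fun r hr => hP₁ r (Icc_subset_Icc hx.1 hs_seg.2 hr)

theorem until_encoding_sound (P₁ P₂ : ℝ → Prop) (K : ℕ) (hK : 1 ≤ K)
    (t : ℕ → ℝ) (ht : ∀ l < K, t l ≤ t (l + 1))
    (k : ℕ) (hk : k < K) (a b : ℝ) (ha : 0 ≤ a) (hab : a ≤ b) (εt : ℝ) (hεt : 0 < εt)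
    (hex : ∃ l < K,
      (Set.Icc (t l) (t (l + 1)) ∩ Set.Icc (t (k + 1) + a) (t k + b - εt)).Nonempty ∧
      (∀ s ∈ Set.Icc (t l) (t (l + 1)), P₂ s) ∧
      (∀ s ∈ Set.Icc (t k) (t (l + 1)), P₁ s)) :
    ∀ x ∈ Set.Icc (t k) (t (k + 1)),
      ∃ t' ∈ Set.Icc (x + a) (x + b), P₂ t' ∧ ∀ t'' ∈ Set.Icc x t', P₁ t'' :=
  until_encoding_sound_general P₁ P₂ K t k a b εt hεt hex
end

section
/- Let T > 0 and let σ_i, σ_{i'} : ℝ → ℝ be monotone (nondecreasing) functions. Let l, u, l', u' ∈ ℝ. Suppose there exists t* ∈ [0, T] such that σ_i(t*) ≥ u and σ_{i'}(t) < l' for all t ∈ [0, t*]. Then there is no t ∈ [0, T] with both σ_i(t) ∈ [l, u) and σ_{i'}(t) ∈ [l', u']. -/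
theorem Monotone.not_lt_and_le_of_until {α β γ : Type*} [LinearOrder α] [Preorder β]
    [Preorder γ] {σ : α → β} {σ' : α → γ} (hσ : Monotone σ) {a ts t : α} {u : β} {l' : γ}
    (hu : u ≤ σ ts) (hbefore : ∀ s ∈ Set.Icc a ts, σ' s < l') (ht : a ≤ t) :
    ¬ (σ t < u ∧ l' ≤ σ' t) := by
  rintro ⟨hσt, hσ't⟩
  rcases le_total t ts with hle | hle
  · exact (hbefore t ⟨ht, hle⟩).not_ge hσ't
  · exact (hu.trans (hσ hle)).not_gt hσt

theorem interference_until_sound_general (T : ℝ)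
    (σi σi' : ℝ → ℝ) (hσi : Monotone σi)
    (l u l' u' : ℝ)
    (h : ∃ ts ∈ Set.Icc (0 : ℝ) T, σi ts ≥ u ∧ ∀ t ∈ Set.Icc 0 ts, σi' t < l') :
    ¬ ∃ t ∈ Set.Icc (0 : ℝ) T, σi t ∈ Set.Ico l u ∧ σi' t ∈ Set.Icc l' u' := by
  rintro ⟨t, ⟨ht0, -⟩, ⟨-, htu⟩, ⟨htl', -⟩⟩
  obtain ⟨ts, -, hu, hbefore⟩ := h
  exact hσi.not_lt_and_le_of_until hu hbefore ht0 ⟨htu, htl'⟩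

theorem interference_until_sound (T : ℝ) (hT : 0 < T)
    (σi σi' : ℝ → ℝ) (hσi : Monotone σi) (hσi' : Monotone σi')
    (l u l' u' : ℝ)
    (h : ∃ ts ∈ Set.Icc (0 : ℝ) T, σi ts ≥ u ∧ ∀ t ∈ Set.Icc 0 ts, σi' t < l') :
    ¬ ∃ t ∈ Set.Icc (0 : ℝ) T, σi t ∈ Set.Ico l u ∧ σi' t ∈ Set.Icc l' u' :=
  interference_until_sound_general T σi σi' hσi l u l' u' h
end

section
/- Let T > 0 and let σ_i, σ_{i'} : ℝ → ℝ be monotone (nondecreasing) functions. Let C ⊆ ℝ × ℝ and let ([l_m, u_m], [l'_m, u'_m]), for m in a finite index set, be a family of interval pairs such that C ⊆ ⋃_m ([l_m, u_m) × [l'_m, u'_m)). Suppose that for each m, either (i) there exists t* ∈ [0, T] with σ_i(t*) ≥ u_m and σ_{i'}(t) < l'_m for all t ∈ [0, t*], or (ii) there exists t* ∈ [0, T] with σ_{i'}(t*) ≥ u'_m and σ_i(t) < l_m for all t ∈ [0, t*]. Then for every t ∈ [0, T], the pair (σ_i(t), σ_{i'}(t)) does not belong to C. -/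
open Set

theorem Monotone.lt_of_until {α β γ : Type*} [LinearOrder α] [Preorder β] [Preorder γ]
    {σ : α → β} {τ : α → γ} (hσ : Monotone σ) {t₀ ts t : α} {u : β} {l' : γ}
    (hts : σ ts ≥ u) (hτ : ∀ s ∈ Icc t₀ ts, τ s < l') (ht : t₀ ≤ t) (hσt : σ t < u) :
    τ t < l' :=
  hτ t ⟨ht, (hσ.reflect_lt (hσt.trans_le hts)).le⟩

theorem interference_constraints_avoid_collision_general {ι : Type*}
    (T : ℝ)
    (σi σi' : ℝ → ℝ) (hσi : Monotone σi) (hσi' : Monotone σi')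
    (C : Set (ℝ × ℝ)) (l u l' u' : ι → ℝ)
    (hC : C ⊆ ⋃ m : ι, Set.Ico (l m) (u m) ×ˢ Set.Ico (l' m) (u' m))
    (h : ∀ m : ι,
      (∃ ts ∈ Set.Icc (0 : ℝ) T, σi ts ≥ u m ∧ ∀ t ∈ Set.Icc 0 ts, σi' t < l' m) ∨
      (∃ ts ∈ Set.Icc (0 : ℝ) T, σi' ts ≥ u' m ∧ ∀ t ∈ Set.Icc 0 ts, σi t < l m)) :
    ∀ t ∈ Set.Icc (0 : ℝ) T, (σi t, σi' t) ∉ C := by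
  intro t ht hcollide
  obtain ⟨m, ⟨hl, hu⟩, hl', hu'⟩ := mem_iUnion.mp (hC hcollide)
  rcases h m with ⟨ts, -, hts, hbefore⟩ | ⟨ts, -, hts, hbefore⟩
  · exact (hσi.lt_of_until hts hbefore ht.1 hu).not_ge hl'
  · exact (hσi'.lt_of_until hts hbefore ht.1 hu').not_ge hl

theorem interference_constraints_avoid_collision {ι : Type*} [Fintype ι]
    (T : ℝ) (hT : 0 < T)
    (σi σi' : ℝ → ℝ) (hσi : Monotone σi) (hσi' : Monotone σi')
    (C : Set (ℝ × ℝ)) (l u l' u' : ι → ℝ)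
    (hC : C ⊆ ⋃ m : ι, Set.Ico (l m) (u m) ×ˢ Set.Ico (l' m) (u' m))
    (h : ∀ m : ι,
      (∃ ts ∈ Set.Icc (0 : ℝ) T, σi ts ≥ u m ∧ ∀ t ∈ Set.Icc 0 ts, σi' t < l' m) ∨
      (∃ ts ∈ Set.Icc (0 : ℝ) T, σi' ts ≥ u' m ∧ ∀ t ∈ Set.Icc 0 ts, σi t < l m)) :
    ∀ t ∈ Set.Icc (0 : ℝ) T, (σi t, σi' t) ∉ C :=
  interference_constraints_avoid_collision_general T σi σi' hσi hσi' C l u l' u' hC h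
end

section
/- Define RP‑STL formulas (without until) as the inductive type with constructors: predicate μ(c) and negated predicate ¬μ(c) for a real threshold c, counting formula Cnt(φ_1, …, φ_L; m) for formulas φ_l and 1 ≤ m ≤ L, conjunction φ₁ ∧ φ₂, disjunction φ₁ ∨ φ₂, always G_{[a,b]}φ, and eventually F_{[a,b]}φ, with 0 ≤ a ≤ b in all temporal operators. For a monotone (nondecreasing) signal σ : ℝ → ℝ, define satisfaction (σ, t) ⊨ φ recursively: (σ, t) ⊨ μ(c) iff σ(t) − c ≥ 0; (σ, t) ⊨ ¬μ(c) iff σ(t) − c < 0; (σ, t) ⊨ Cnt(φ_1,…,φ_L; m) iff at least m of the φ_l are satisfied at t; ∧ and ∨ are standard; (σ, t) ⊨ G_{[a,b]}φ iff (σ, t') ⊨ φ for all t' ∈ [t+a, t+b]; (σ, t) ⊨ F_{[a,b]}φ iff (σ, t') ⊨ φ for some t' ∈ [t+a, t+b]. Fix times t_0 ≤ … ≤ t_K, stamped values s_0, …, s_K ∈ ℝ, ε > 0, ε_t > 0, and let Δ = max_l (t_{l+1} − t_l). Define the Boolean encoding E_k(φ) for k ∈ {0, …, K−1} recursively: E_k(μ(c))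 := (s_k − c ≥ ε) ∧ (s_{k+1} − c ≥ ε); E_k(¬μ(c)) := (s_k − c ≤ −ε) ∧ (s_{k+1} − c ≤ −ε); E_k(Cnt(φ_1,…,φ_L; m)) := at least m of E_k(φ_1), …, E_k(φ_L) hold; E_k(φ₁ ∧ φ₂) := E_k(φ₁) ∧ E_k(φ₂); E_k(φ₁ ∨ φ₂) := E_k(φ₁) ∨ E_k(φ₂); E_k(G_{[a,b]}φ) := for every l with [t_l, t_{l+1}] ∩ [t_k + a − ε_t, t_{k+1} + b] ≠ ∅, E_l(φ); E_k(F_{[a,b]}φ) := (t_{k+1} − t_k ≤ b − a − ε_t) ∧ (there exists l with [t_l, t_{l+1}] ∩ [t_{k+1} + a, t_k + b − ε_t] ≠ ∅ and E_l(φ)). Define the padded horizon H(φ) by H(μ) = H(¬μ) = 0, H(Cnt) = max_l H(φ_l), H(∧), H(∨) = max of the two, H(G_{[a,b]}φ) = H(F_{[a,b]}φ) = b + Δ + H(φ). Theorem (soundness): for every k ∈ {0, …, K−1} with t_{k+1} + H(φ) ≤ t_K, if E_k(φ) holds, then every monotone function σ : ℝ → ℝ with |σ(t_l) − s_l| < ε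 for all l ∈ {0, …, K} satisfies (σ, t) ⊨ φ for all t ∈ [t_k, t_{k+1}]. -/
/-- RP-STL formulas (without until): predicate, negated predicate, counting
formula, conjunction, disjunction, always, eventually. -/
inductive RPSTL : Type where
  | pred (c : ℝ)
  | npred (c : ℝ)
  | cnt (L : ℕ) (φ : Fin L → RPSTL) (m : ℕ)
  | conj (φ₁ φ₂ : RPSTL)
  | disj (φ₁ φ₂ : RPSTL)
  | always (a b : ℝ) (φ : RPSTL)
  | eventually (a b : ℝ) (φ : RPSTL)

/-- Well-formedness: `1 ≤ m ≤ L` in counting formulas, `0 ≤ a ≤ b` in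
temporal operators. -/
def RPSTL.WF : RPSTL → Prop
  | .pred _ => True
  | .npred _ => True
  | .cnt L φ m => 1 ≤ m ∧ m ≤ L ∧ ∀ l, (φ l).WF
  | .conj φ₁ φ₂ => φ₁.WF ∧ φ₂.WF
  | .disj φ₁ φ₂ => φ₁.WF ∧ φ₂.WF
  | .always a b φ => 0 ≤ a ∧ a ≤ b ∧ φ.WF
  | .eventually a b φ => 0 ≤ a ∧ a ≤ b ∧ φ.WF

/-- Satisfaction `(σ, t) ⊨ φ`. The counting formula is satisfied iff at least
`m` of the subformulas are satisfied. -/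
def RPSTL.sat (σ : ℝ → ℝ) : RPSTL → ℝ → Prop
  | .pred c, t => σ t - c ≥ 0
  | .npred c, t => σ t - c < 0
  | .cnt L φ m, t => ∃ S : Finset (Fin L), m ≤ S.card ∧ ∀ l ∈ S, (φ l).sat σ t
  | .conj φ₁ φ₂, t => φ₁.sat σ t ∧ φ₂.sat σ t
  | .disj φ₁ φ₂, t => φ₁.sat σ t ∨ φ₂.sat σ t
  | .always a b φ, t => ∀ t' ∈ Set.Icc (t + a) (t + b), φ.sat σ t'
  | .eventually a b φ, t => ∃ t' ∈ Set.Icc (t + a) (t + b), φ.sat σ t'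

/-- The Boolean encoding `E_k(φ)` over the time stamps `t`, stamped values `s`,
tracking margin `ε` and timing margin `εt`, for segments `k ∈ {0, …, K-1}`. -/
def RPSTL.enc (K : ℕ) (t s : ℕ → ℝ) (ε εt : ℝ) : RPSTL → ℕ → Prop
  | .pred c, k => s k - c ≥ ε ∧ s (k + 1) - c ≥ ε
  | .npred c, k => s k - c ≤ -ε ∧ s (k + 1) - c ≤ -ε
  | .cnt L φ m, k => ∃ S : Finset (Fin L), m ≤ S.card ∧ ∀ l ∈ S, (φ l).enc K t s ε εt k
  | .conj φ₁ φ₂, k => φ₁.enc K t s ε εt k ∧ φ₂.enc K t s ε εt k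
  | .disj φ₁ φ₂, k => φ₁.enc K t s ε εt k ∨ φ₂.enc K t s ε εt k
  | .always a b φ, k => ∀ l < K,
      (Set.Icc (t l) (t (l + 1)) ∩ Set.Icc (t k + a - εt) (t (k + 1) + b)).Nonempty →
      φ.enc K t s ε εt l
  | .eventually a b φ, k => (t (k + 1) - t k ≤ b - a - εt) ∧
      ∃ l < K,
        (Set.Icc (t l) (t (l + 1)) ∩ Set.Icc (t (k + 1) + a) (t k + b - εt)).Nonempty ∧
        φ.enc K t s ε εt l

/-- The padded horizon `H(φ)`, where `Δ` is the maximal segment length. -/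
noncomputable def RPSTL.H (Δ : ℝ) : RPSTL → ℝ
  | .pred _ => 0
  | .npred _ => 0
  | .cnt L φ _ => ⨆ l : Fin L, (φ l).H Δ
  | .conj φ₁ φ₂ => max (φ₁.H Δ) (φ₂.H Δ)
  | .disj φ₁ φ₂ => max (φ₁.H Δ) (φ₂.H Δ)
  | .always _ b φ => b + Δ + φ.H Δ
  | .eventually _ b φ => b + Δ + φ.H Δ

/-!
The proof is an induction on `φ`, made for all segments `k` at once because the temporal
operators pass from segment `k` to other segments `l`. In the atomic cases monotonicity confines
`σ` on `[t_k, t_{k+1}]` between `σ(t_k)` and `σ(t_{k+1})`, which lie within `ε` of the stamped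
values. For `G_{[a,b]}` every `t' ∈ [x + a, x + b]` lies in some segment `l` meeting the window of
the encoding, and for `F_{[a,b]}` a point of the chosen segment `l` inside the window lies in
`[x + a, x + b]`. In both cases segment `l` ends at most `Δ` after that time, which is what the
summand `Δ` of the padded horizon pays for.
-/

theorem exists_lt_mem_Icc_of_mem_Icc {α : Type*} [LinearOrder α] {t : ℕ → α} {i K : ℕ} {x : α}
    (hi : i < K) (hx : x ∈ Set.Icc (t i) (t K)) : ∃ l < K, x ∈ Set.Icc (t l) (t (l + 1)) := by
  induction K with
  | zero => omega
  | succ n ih =>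
    rcases (Nat.lt_succ_iff.mp hi).eq_or_lt with rfl | hin
    · exact ⟨i, i.lt_succ_self, hx⟩
    · by_cases hxn : x ≤ t n
      · obtain ⟨l, hl, hxl⟩ := ih hin ⟨hx.1, hxn⟩
        exact ⟨l, by omega, hxl⟩
      · exact ⟨n, n.lt_succ_self, (not_le.mp hxn).le, hx.2⟩

namespace RPSTL

theorem H_nonneg {Δ : ℝ} (hΔ : 0 ≤ Δ) : ∀ φ : RPSTL, φ.WF → 0 ≤ φ.H Δ
  | .pred _, _ | .npred _, _ => le_rfl
  | .cnt _ φ _, ⟨_, _, hφ⟩ => Real.iSup_nonneg fun l => H_nonneg hΔ (φ l) (hφ l)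
  | .conj φ₁ _, ⟨h₁, _⟩ | .disj φ₁ _, ⟨h₁, _⟩ => (H_nonneg hΔ φ₁ h₁).trans (le_max_left _ _)
  | .always _ _ φ, ⟨ha, hab, hφ⟩ | .eventually _ _ φ, ⟨ha, hab, hφ⟩ =>
    add_nonneg (add_nonneg (ha.trans hab) hΔ) (H_nonneg hΔ φ hφ)

theorem H_le_H_cnt (Δ : ℝ) {L : ℕ} (φ : Fin L → RPSTL) (m : ℕ) (l : Fin L) :
    (φ l).H Δ ≤ (cnt L φ m).H Δ :=
  le_ciSup (f := fun j => (φ j).H Δ) (Set.finite_range _).bddAbove l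

section Soundness

variable {K : ℕ} {t s : ℕ → ℝ} {ε εt Δ : ℝ} {σ : ℝ → ℝ}

variable (K t s ε εt Δ σ) in
def EncSound (φ : RPSTL) : Prop :=
  ∀ k < K, t (k + 1) + φ.H Δ ≤ t K → φ.enc K t s ε εt k →
    ∀ x ∈ Set.Icc (t k) (t (k + 1)), φ.sat σ x

theorem encSound_pred (hσ : Monotone σ) (htrack : ∀ l ≤ K, |σ (t l) - s l| < ε) (c : ℝ) :
    (pred c).EncSound K t s ε εt Δ σ := by
  rintro k hk - ⟨henc, -⟩ x hx
  show σ x - c ≥ 0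
  linarith [hσ hx.1, (abs_lt.mp (htrack k hk.le)).1]

theorem encSound_npred (hσ : Monotone σ) (htrack : ∀ l ≤ K, |σ (t l) - s l| < ε) (c : ℝ) :
    (npred c).EncSound K t s ε εt Δ σ := by
  rintro k hk - ⟨-, henc⟩ x hx
  show σ x - c < 0
  linarith [hσ hx.2, (abs_lt.mp (htrack (k + 1) hk)).2]

theorem encSound_cnt {L : ℕ} {φ : Fin L → RPSTL} (m : ℕ)
    (hφ : ∀ l, (φ l).EncSound K t s ε εt Δ σ) : (cnt L φ m).EncSound K t s ε εt Δ σ := by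
  rintro k hk hH ⟨S, hS, henc⟩ x hx
  refine ⟨S, hS, fun l hl => hφ l k hk ?_ (henc l hl) x hx⟩
  linarith [H_le_H_cnt Δ φ m l]

theorem encSound_conj {φ₁ φ₂ : RPSTL} (h₁ : φ₁.EncSound K t s ε εt Δ σ)
    (h₂ : φ₂.EncSound K t s ε εt Δ σ) : (conj φ₁ φ₂).EncSound K t s ε εt Δ σ := by
  rintro k hk (hH : _ + max _ _ ≤ _) ⟨henc₁, henc₂⟩ x hx
  exact ⟨h₁ k hk (by linarith [le_max_left (φ₁.H Δ) (φ₂.H Δ)]) henc₁ x hx,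
    h₂ k hk (by linarith [le_max_right (φ₁.H Δ) (φ₂.H Δ)]) henc₂ x hx⟩

theorem encSound_disj {φ₁ φ₂ : RPSTL} (h₁ : φ₁.EncSound K t s ε εt Δ σ)
    (h₂ : φ₂.EncSound K t s ε εt Δ σ) : (disj φ₁ φ₂).EncSound K t s ε εt Δ σ := by
  rintro k hk (hH : _ + max _ _ ≤ _) (henc₁ | henc₂) x hx
  · exact Or.inl (h₁ k hk (by linarith [le_max_left (φ₁.H Δ) (φ₂.H Δ)]) henc₁ x hx)
  · exact Or.inr (h₂ k hk (by linarith [le_max_right (φ₁.H Δ) (φ₂.H Δ)]) henc₂ x hx)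

theorem encSound_always {a b : ℝ} {φ : RPSTL} (ha : 0 ≤ a) (hφ : φ.WF) (hεt : 0 ≤ εt)
    (hΔ : ∀ l < K, t (l + 1) - t l ≤ Δ) (h : φ.EncSound K t s ε εt Δ σ) :
    (always a b φ).EncSound K t s ε εt Δ σ := by
  rintro k hk (hH : _ + (b + Δ + φ.H Δ) ≤ _) henc x hx y hy
  have hΔ0 : 0 ≤ Δ := by linarith [hΔ k hk, hx.1, hx.2]
  have hHφ : 0 ≤ φ.H Δ := H_nonneg hΔ0 φ hφ
  obtain ⟨l, hl, hyl⟩ := exists_lt_mem_Icc_of_mem_Icc (t := t) (x := y) hk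
    ⟨by linarith [hy.1, hx.1], by linarith [hy.2, hx.2]⟩
  refine h l hl ?_ (henc l hl ⟨y, hyl, ?_, ?_⟩) y hyl
  · linarith [hΔ l hl, hyl.1, hy.2, hx.2]
  · linarith [hy.1, hx.1]
  · linarith [hy.2, hx.2]

theorem encSound_eventually {a b : ℝ} {φ : RPSTL} (hεt : 0 ≤ εt)
    (hΔ : ∀ l < K, t (l + 1) - t l ≤ Δ) (h : φ.EncSound K t s ε εt Δ σ) :
    (eventually a b φ).EncSound K t s ε εt Δ σ := by
  rintro k hk (hH : _ + (b + Δ + φ.H Δ) ≤ _) ⟨-, l, hl, ⟨y, hyl, hyk⟩, henc⟩ x hx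
  refine ⟨y, ⟨by linarith [hyk.1, hx.2], by linarith [hyk.2, hx.1]⟩, h l hl ?_ henc y hyl⟩
  linarith [hΔ l hl, hyl.1, hyk.2, hx.1, hx.2]

end Soundness

end RPSTL

theorem rpstl_encoding_sound_general
    (K : ℕ) (t s : ℕ → ℝ)
    (ε εt : ℝ) (hεt : 0 < εt)
    (Δ : ℝ) (hΔ : IsGreatest {d : ℝ | ∃ l < K, d = t (l + 1) - t l} Δ)
    (φ : RPSTL) (hwf : φ.WF)
    (k : ℕ) (hk : k < K)
    (hH : t (k + 1) + φ.H Δ ≤ t K)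
    (henc : φ.enc K t s ε εt k)
    (σ : ℝ → ℝ) (hσ : Monotone σ)
    (htrack : ∀ l ≤ K, |σ (t l) - s l| < ε) :
    ∀ x ∈ Set.Icc (t k) (t (k + 1)), φ.sat σ x := by
  have hΔ' : ∀ l < K, t (l + 1) - t l ≤ Δ := fun l hl => hΔ.2 ⟨l, hl, rfl⟩
  suffices ∀ ψ : RPSTL, ψ.WF → ψ.EncSound K t s ε εt Δ σ from this φ hwf k hk hH henc
  intro ψ hψ
  induction ψ with
  | pred c => exact RPSTL.encSound_pred hσ htrack c
  | npred c => exact RPSTL.encSound_npred hσ htrack c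
  | cnt L ψ m ih => exact RPSTL.encSound_cnt m fun l => ih l (hψ.2.2 l)
  | conj ψ₁ ψ₂ ih₁ ih₂ => exact RPSTL.encSound_conj (ih₁ hψ.1) (ih₂ hψ.2)
  | disj ψ₁ ψ₂ ih₁ ih₂ => exact RPSTL.encSound_disj (ih₁ hψ.1) (ih₂ hψ.2)
  | always a b ψ ih => exact RPSTL.encSound_always hψ.1 hψ.2.2 hεt.le hΔ' (ih hψ.2.2)
  | eventually a b ψ ih => exact RPSTL.encSound_eventually hεt.le hΔ' (ih hψ.2.2)

/-- Soundness of the RP-STL MILP encoding: if `E_k(φ)` holds (and the padded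
horizon of `φ` fits within the planning horizon), then every monotone signal
passing within `ε` of each stamped value satisfies `φ` throughout `[t_k, t_{k+1}]`. -/
theorem rpstl_encoding_sound
    (K : ℕ) (hK : 1 ≤ K) (t s : ℕ → ℝ)
    (ht : ∀ l < K, t l ≤ t (l + 1))
    (ε εt : ℝ) (hε : 0 < ε) (hεt : 0 < εt)
    (Δ : ℝ) (hΔ : IsGreatest {d : ℝ | ∃ l < K, d = t (l + 1) - t l} Δ)
    (φ : RPSTL) (hwf : φ.WF)
    (k : ℕ) (hk : k < K)
    (hH : t (k + 1) + φ.H Δ ≤ t K)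
    (henc : φ.enc K t s ε εt k)
    (σ : ℝ → ℝ) (hσ : Monotone σ)
    (htrack : ∀ l ≤ K, |σ (t l) - s l| < ε) :
    ∀ x ∈ Set.Icc (t k) (t (k + 1)), φ.sat σ x :=
  rpstl_encoding_sound_general K t s ε εt hεt Δ hΔ φ hwf k hk hH henc σ hσ htrack
end
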